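/- arXiv:2505.01604 — 2 statements merged into one kernel-verified Lean document; each statement's English description precedes it below -/
import Mathlib

section
/- The function φ(x) = (e^{-x} - 1 + x)/(x(1 - e^{-x})) satisfies 1/2 < φ(x) < 1 for all x > 0. -/
lemma aux_one_sub_mul_exp_lt (y : ℝ) (hy : y ≠ 0) : (1 - y) * Real.exp y < 1 := by
  have h : 1 - y < Real.exp (-y) := by
    have := Real.add_one_lt_exp (x := -y) (by simpa using hy)
    linarith
  have hp := Real.exp_pos y
  calc (1 - y) * Real.exp y < Real.exp (-y) * Real.exp y :=
        (mul_lt_mul_of_pos_right h hp)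
    _ = 1 := by rw [← Real.exp_add]; simp

lemma aux_key (x : ℝ) (hx : 0 < x) : (2 - x) * Real.exp x < 2 + x := by
  set g : ℝ → ℝ := fun y => 2 + y - (2 - y) * Real.exp y with hg
  have hderiv : ∀ y : ℝ, HasDerivAt g (1 - (1 - y) * Real.exp y) y := by
    intro y
    have h1 : HasDerivAt (fun y : ℝ => (2 - y) * Real.exp y)
        ((-1) * Real.exp y + (2 - y) * Real.exp y) y :=
      ((hasDerivAt_id y).const_sub 2).mul (Real.hasDerivAt_exp y)
    have h2 : HasDerivAt (fun y : ℝ => 2 + y) 1 y := by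
      simpa using (hasDerivAt_id y).const_add 2
    have := h2.sub h1
    refine this.congr_deriv ?_
    ring
  have hmono : StrictMonoOn g (Set.Ici (0 : ℝ)) := by
    apply strictMonoOn_of_deriv_pos (convex_Ici 0)
    · exact (continuous_const.add continuous_id |>.sub
        ((continuous_const.sub continuous_id).mul Real.continuous_exp)).continuousOn
    · intro y hy
      rw [interior_Ici] at hy
      rw [(hderiv y).deriv]
      have := aux_one_sub_mul_exp_lt y (ne_of_gt hy)
      linarith
  have h0 : g 0 = 0 := by simp [hg]
  have := hmono (Set.self_mem_Ici) (Set.mem_Ici.2 hx.le) hx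
  rw [h0] at this
  simp only [hg] at this
  linarith

/-- The thinning probability `φ(x) = (e^{-x} - 1 + x)/(x(1 - e^{-x}))` satisfies
`1/2 < φ(x) < 1` for all `x > 0`. -/
theorem phi_mem_Ioo (x : ℝ) (hx : 0 < x) :
    1 / 2 < (Real.exp (-x) - 1 + x) / (x * (1 - Real.exp (-x))) ∧
      (Real.exp (-x) - 1 + x) / (x * (1 - Real.exp (-x))) < 1 := by
  have hE : Real.exp (-x) < 1 := by
    rw [← Real.exp_zero]; exact Real.exp_lt_exp.2 (by linarith)
  have hEpos := Real.exp_pos (-x)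
  have hD : 0 < x * (1 - Real.exp (-x)) := mul_pos hx (by linarith)
  have hprod : Real.exp (-x) * Real.exp x = 1 := by
    rw [← Real.exp_add]; simp
  have hxpos := Real.exp_pos x
  constructor
  · rw [lt_div_iff₀ hD]
    have hkey := aux_key x hx
    -- (2 - x) * exp x < 2 + x  →  2 - x < (2 + x) * exp (-x)
    have h2 : 2 - x < (2 + x) * Real.exp (-x) := by
      nlinarith [mul_lt_mul_of_pos_right hkey hEpos]
    nlinarith
  · rw [div_lt_one hD]
    have h1 : 1 + x < Real.exp x := by have := Real.add_one_lt_exp (ne_of_gt hx); linarith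
    have h2 : (1 + x) * Real.exp (-x) < 1 := by
      nlinarith [mul_lt_mul_of_pos_right h1 hEpos]
    nlinarith
end

section
/- Let H be a nondecreasing right-continuous function with H(0)=0, jumps ΔH(s) ∈ [0,1], and continuous part H^c. Define F̄(t) = exp(-H^c(t)) ∏_{s ≤ t} (1 - ΔH(s)). Then F = 1 - F̄ is non-negative, non-decreasing, right-continuous, and if additionally ∫_{(0,∞)} dH = ∞ with jumps bounded away from 1 on compacts or H^c(∞) = ∞, then F(t) → 1 as t → ∞. In particular, if H^c(t) → ∞ then F̄(t) ≤ exp(-H^c(t)) → 0. -/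
open Set Filter

section Aux

variable {ι : Type*} (f : ι → ℝ)

lemma aux_prod_nonneg (h0 : ∀ i, 0 ≤ f i) (h1 : ∀ i, f i ≤ 1) (G : Finset ι) :
    0 ≤ ∏ i ∈ G, (1 - f i) :=
  Finset.prod_nonneg fun i _ => by linarith [h1 i]

lemma aux_prod_le_one (h0 : ∀ i, 0 ≤ f i) (h1 : ∀ i, f i ≤ 1) (G : Finset ι) :
    ∏ i ∈ G, (1 - f i) ≤ 1 :=
  Finset.prod_le_one (fun i _ => by linarith [h1 i]) (fun i _ => by linarith [h0 i])

lemma aux_prod_lb (h0 : ∀ i, 0 ≤ f i) (h1 : ∀ i, f i ≤ 1) (G : Finset ι) :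
    1 - ∑ i ∈ G, f i ≤ ∏ i ∈ G, (1 - f i) := by
  classical
  induction G using Finset.induction_on with
  | empty => simp
  | @insert a G ha ih =>
    rw [Finset.prod_insert ha, Finset.sum_insert ha]
    have h1a : 0 ≤ 1 - f a := by linarith [h1 a]
    have := mul_le_mul_of_nonneg_left ih h1a
    nlinarith [h0 a, Finset.sum_nonneg (fun i (_ : i ∈ G) => h0 i)]

lemma aux_multipliable (h0 : ∀ i, 0 ≤ f i) (h1 : ∀ i, f i ≤ 1) :
    Multipliable fun i => 1 - f i := by
  classical
  have hanti : Antitone fun G : Finset ι => ∏ i ∈ G, (1 - f i) := by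
    intro G G' hGG'
    have := Finset.prod_sdiff (f := fun i => 1 - f i) hGG'
    calc ∏ i ∈ G', (1 - f i) = (∏ i ∈ G' \ G, (1 - f i)) * ∏ i ∈ G, (1 - f i) := this.symm
      _ ≤ 1 * ∏ i ∈ G, (1 - f i) :=
          mul_le_mul_of_nonneg_right (aux_prod_le_one f h0 h1 _) (aux_prod_nonneg f h0 h1 _)
      _ = ∏ i ∈ G, (1 - f i) := one_mul _
  have hbdd : BddBelow (Set.range fun G : Finset ι => ∏ i ∈ G, (1 - f i)) := by
    refine ⟨0, ?_⟩
    rintro x ⟨G, rfl⟩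
    exact aux_prod_nonneg f h0 h1 G
  exact ⟨_, tendsto_atTop_ciInf hanti hbdd⟩

lemma aux_tprod_nonneg (h0 : ∀ i, 0 ≤ f i) (h1 : ∀ i, f i ≤ 1) :
    0 ≤ ∏' i, (1 - f i) :=
  ge_of_tendsto' (aux_multipliable f h0 h1).hasProd fun G => aux_prod_nonneg f h0 h1 G

lemma aux_tprod_le_one (h0 : ∀ i, 0 ≤ f i) (h1 : ∀ i, f i ≤ 1) :
    ∏' i, (1 - f i) ≤ 1 :=
  le_of_tendsto' (aux_multipliable f h0 h1).hasProd fun G => aux_prod_le_one f h0 h1 G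

end Aux

/-- Product-integral survival function. Let `Hc` be the continuous part of a
cumulative hazard (monotone, continuous, `Hc 0 = 0`) and `Δ` the jumps,
valued in `[0,1]`, with countable support and locally summable. Define
`F̄(t) = exp(-Hc(t)) ∏_{0 < s ≤ t} (1 - Δ(s))` and `F = 1 - F̄`. Then on
`[0,∞)` the function `F` takes values in `[0,1]`, is non-decreasing and
right-continuous; moreover `F̄(t) ≤ exp(-Hc(t))`, so if `Hc(t) → ∞` then
`F(t) → 1` as `t → ∞`. -/
theorem product_integral_survival
    (Hc : ℝ → ℝ) (hmono : Monotone Hc) (hcont : Continuous Hc) (h0 : Hc 0 = 0)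
    (Δ : ℝ → ℝ) (hΔ : ∀ s, Δ s ∈ Icc (0:ℝ) 1)
    (hcount : (Function.support Δ).Countable)
    (hsum : ∀ t : ℝ, Summable fun s : ↥(Function.support Δ ∩ Ioc 0 t) => Δ s)
    (F : ℝ → ℝ)
    (hF : ∀ t, F t = 1 - Real.exp (-Hc t) *
      ∏' s : ↥(Function.support Δ ∩ Ioc 0 t), (1 - Δ s)) :
    (∀ t, 0 ≤ t → F t ∈ Icc (0:ℝ) 1) ∧
    MonotoneOn F (Ici (0:ℝ)) ∧
    (∀ t, 0 ≤ t → Tendsto F (nhdsWithin t (Ici t)) (nhds (F t))) ∧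
    (∀ t, 0 ≤ t → 1 - F t ≤ Real.exp (-Hc t)) ∧
    (Tendsto Hc atTop atTop → Tendsto F atTop (nhds 1)) := by
  classical
  set S := Function.support Δ with hS
  have hΔ0 : ∀ s : ℝ, 0 ≤ Δ s := fun s => (hΔ s).1
  have hΔ1 : ∀ s : ℝ, Δ s ≤ 1 := fun s => (hΔ s).2
  -- generic facts about products over subsets
  have hsub0 : ∀ A : Set ℝ, ∀ s : ↥A, 0 ≤ Δ (s : ℝ) := fun A s => hΔ0 _
  have hsub1 : ∀ A : Set ℝ, ∀ s : ↥A, Δ (s : ℝ) ≤ 1 := fun A s => hΔ1 _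
  set P : ℝ → ℝ := fun t => ∏' s : ↥(S ∩ Ioc 0 t), (1 - Δ s) with hP
  have hPnn : ∀ t, 0 ≤ P t := fun t =>
    aux_tprod_nonneg _ (hsub0 (S ∩ Ioc 0 t)) (hsub1 (S ∩ Ioc 0 t))
  have hPle1 : ∀ t, P t ≤ 1 := fun t =>
    aux_tprod_le_one _ (hsub0 (S ∩ Ioc 0 t)) (hsub1 (S ∩ Ioc 0 t))
  have hFeq : ∀ t, F t = 1 - Real.exp (-Hc t) * P t := hF
  have hexp_le_one : ∀ t, 0 ≤ t → Real.exp (-Hc t) ≤ 1 := by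
    intro t ht
    have : Hc 0 ≤ Hc t := hmono ht
    calc Real.exp (-Hc t) ≤ Real.exp 0 := Real.exp_le_exp.2 (by linarith [h0 ▸ this])
      _ = 1 := Real.exp_zero
  -- splitting of the product
  have hsplit : ∀ a b : ℝ, 0 ≤ a → a ≤ b →
      P b = P a * ∏' s : ↥(S ∩ Ioc a b), (1 - Δ s) := by
    intro a b ha hab
    have hset : S ∩ Ioc 0 b = (S ∩ Ioc 0 a) ∪ (S ∩ Ioc a b) := by
      rw [← Set.inter_union_distrib_left, Set.Ioc_union_Ioc_eq_Ioc ha hab]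
    have hdisj : Disjoint (S ∩ Ioc 0 a) (S ∩ Ioc a b) := by
      refine Set.disjoint_left.2 ?_
      rintro x ⟨-, -, hx2⟩ ⟨-, hx3, -⟩
      exact absurd hx2 (not_le.2 hx3)
    have hm1 : Multipliable (((fun x : ℝ => 1 - Δ x) ∘ (↑)) : ↥(S ∩ Ioc 0 a) → ℝ) :=
      aux_multipliable _ (hsub0 _) (hsub1 _)
    have hm2 : Multipliable (((fun x : ℝ => 1 - Δ x) ∘ (↑)) : ↥(S ∩ Ioc a b) → ℝ) :=
      aux_multipliable _ (hsub0 _) (hsub1 _)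
    have := Multipliable.tprod_union_disjoint (f := fun x : ℝ => 1 - Δ x) hdisj hm1 hm2
    simp only [hP, Function.comp] at this ⊢
    rw [hset]
    exact this
  -- Part 1
  have part1 : ∀ t, 0 ≤ t → F t ∈ Icc (0:ℝ) 1 := by
    intro t ht
    rw [hFeq t]
    constructor
    · have h1 : Real.exp (-Hc t) * P t ≤ 1 * 1 :=
        mul_le_mul (hexp_le_one t ht) (hPle1 t) (hPnn t) zero_le_one
      simp only [one_mul] at h1; linarith
    · have : 0 ≤ Real.exp (-Hc t) * P t := mul_nonneg (Real.exp_pos _).le (hPnn t)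
      linarith
  -- Part 2
  have part2 : MonotoneOn F (Ici (0:ℝ)) := by
    intro s hs t ht hst
    rw [hFeq s, hFeq t]
    have hsplit' := hsplit s t hs hst
    set Q := ∏' x : ↥(S ∩ Ioc s t), (1 - Δ x) with hQ
    have hQnn : 0 ≤ Q := aux_tprod_nonneg _ (hsub0 _) (hsub1 _)
    have hQle : Q ≤ 1 := aux_tprod_le_one _ (hsub0 _) (hsub1 _)
    have hexp : Real.exp (-Hc t) ≤ Real.exp (-Hc s) :=
      Real.exp_le_exp.2 (by linarith [hmono hst])
    have : Real.exp (-Hc t) * P t ≤ Real.exp (-Hc s) * P s := by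
      rw [hsplit']
      calc Real.exp (-Hc t) * (P s * Q) ≤ Real.exp (-Hc s) * (P s * Q) :=
            mul_le_mul_of_nonneg_right hexp (mul_nonneg (hPnn s) hQnn)
        _ ≤ Real.exp (-Hc s) * (P s * 1) := by
            apply mul_le_mul_of_nonneg_left _ (Real.exp_pos _).le
            exact mul_le_mul_of_nonneg_left hQle (hPnn s)
        _ = Real.exp (-Hc s) * P s := by rw [mul_one]
    linarith
  -- Part 4
  have part4 : ∀ t, 0 ≤ t → 1 - F t ≤ Real.exp (-Hc t) := by
    intro t _
    rw [hFeq t]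
    have : Real.exp (-Hc t) * P t ≤ Real.exp (-Hc t) * 1 :=
      mul_le_mul_of_nonneg_left (hPle1 t) (Real.exp_pos _).le
    linarith
  -- Part 3: right-continuity
  have part3 : ∀ t, 0 ≤ t → Tendsto F (nhdsWithin t (Ici t)) (nhds (F t)) := by
    intro t ht
    set Q : ℝ → ℝ := fun u => ∏' s : ↥(S ∩ Ioc t u), (1 - Δ s) with hQdef
    have hQnn : ∀ u, 0 ≤ Q u := fun u => aux_tprod_nonneg _ (hsub0 _) (hsub1 _)
    have hQle : ∀ u, Q u ≤ 1 := fun u => aux_tprod_le_one _ (hsub0 _) (hsub1 _)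
    -- Q tends to 1 from the right
    have hQtendsto : Tendsto Q (nhdsWithin t (Ici t)) (nhds 1) := by
      rw [Metric.tendsto_nhdsWithin_nhds]
      intro ε hε
      -- use summability on (0, t+1]
      have hsummB : Summable fun s : ↥(S ∩ Ioc 0 (t + 1)) => Δ s := hsum (t + 1)
      obtain ⟨s₀, hs₀⟩ := hsummB.vanishing (e := Metric.ball (0:ℝ) (ε/2))
        (Metric.ball_mem_nhds _ (by linarith))
      set T : Finset ℝ := (s₀.image (fun x : ↥(S ∩ Ioc 0 (t + 1)) => (x : ℝ))).filter (fun x => t < x) with hT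
      set δ₀ : ℝ := if h : T.Nonempty then T.min' h - t else 1 with hδ₀
      have hδ₀pos : 0 < δ₀ := by
        rw [hδ₀]
        split_ifs with h
        · have := (Finset.mem_filter.1 (T.min'_mem h)).2
          linarith
        · norm_num
      have hδ₀min : ∀ x ∈ T, δ₀ ≤ x - t := by
        intro x hx
        rw [hδ₀]
        rw [dif_pos ⟨x, hx⟩]
        have := T.min'_le x hx
        linarith
      refine ⟨min δ₀ 1, lt_min hδ₀pos one_pos, ?_⟩
      intro u hu hdist
      have hut : t ≤ u := hu
      have hdist' : u - t < min δ₀ 1 := by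
        rw [Real.dist_eq, abs_of_nonneg (by linarith)] at hdist
        exact hdist
      have hub : u ≤ t + 1 := by
        have := lt_of_lt_of_le hdist' (min_le_right _ _); linarith
      have hCB : S ∩ Ioc t u ⊆ S ∩ Ioc 0 (t + 1) := by
        rintro x ⟨hx1, hx2, hx3⟩
        exact ⟨hx1, lt_of_le_of_lt ht hx2, le_trans hx3 hub⟩
      -- lower bound for Q u
      have hQlb : 1 - ε/2 ≤ Q u := by
        refine ge_of_tendsto'
          (aux_multipliable (fun s : ↥(S ∩ Ioc t u) => Δ s) (hsub0 _) (hsub1 _)).hasProd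
          (fun G => ?_)
        have hle := aux_prod_lb (fun s : ↥(S ∩ Ioc t u) => Δ s) (hsub0 _) (hsub1 _) G
        -- map G into a finset of ↥(S ∩ Ioc 0 (t+1)) disjoint from s₀
        set e : ↥(S ∩ Ioc t u) → ↥(S ∩ Ioc 0 (t + 1)) := Set.inclusion hCB with he
        have hinj : Function.Injective e := Set.inclusion_injective hCB
        set G' : Finset ↥(S ∩ Ioc 0 (t + 1)) := G.map ⟨e, hinj⟩ with hG'
        have hGdisj : Disjoint G' s₀ := by
          rw [Finset.disjoint_left]
          rintro x hxG' hxs₀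
          obtain ⟨y, hy, rfl⟩ := Finset.mem_map.1 hxG'
          have hxy : (e y : ℝ) = (y : ℝ) := rfl
          have hyIoc : (y : ℝ) ∈ Ioc t u := y.2.2
          have hxT : (e y : ℝ) ∈ T := by
            rw [hT, Finset.mem_filter]
            have hxs₀' : e y ∈ s₀ := hxs₀
            have himg : ((e y : ℝ)) ∈ s₀.image (fun x : ↥(S ∩ Ioc 0 (t+1)) => (x : ℝ)) :=
              Finset.mem_image_of_mem _ hxs₀'
            refine ⟨himg, ?_⟩
            rw [hxy]; exact hyIoc.1
          have := hδ₀min _ hxT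
          rw [hxy] at this
          have h1 : (y : ℝ) ≤ u := hyIoc.2
          have h2 : u - t < δ₀ := lt_of_lt_of_le hdist' (min_le_left _ _)
          linarith
        have hsumG := hs₀ G' hGdisj
        rw [Metric.mem_ball, dist_zero_right, Real.norm_eq_abs] at hsumG
        have hsum_eq : ∑ x ∈ G', Δ (x : ℝ) = ∑ x ∈ G, Δ (x : ℝ) := by
          rw [hG', Finset.sum_map]
          rfl
        have habs : ∑ x ∈ G, Δ (x : ℝ) ≤ ε/2 := by
          rw [← hsum_eq]
          exact le_of_lt (lt_of_le_of_lt (le_abs_self _) hsumG)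
        calc 1 - ε/2 ≤ 1 - ∑ x ∈ G, Δ (x : ℝ) := by linarith
          _ ≤ ∏ x ∈ G, (1 - Δ (x : ℝ)) := hle
      rw [Real.dist_eq, abs_of_nonpos (by linarith [hQle u])]
      linarith [hQle u]
    -- assemble
    have hGlim : Tendsto (fun u => 1 - Real.exp (-Hc u) * (P t * Q u))
        (nhdsWithin t (Ici t)) (nhds (F t)) := by
      have hexp : Tendsto (fun u => Real.exp (-Hc u)) (nhdsWithin t (Ici t))
          (nhds (Real.exp (-Hc t))) :=
        ((Real.continuous_exp.comp hcont.neg).tendsto t).mono_left nhdsWithin_le_nhds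
      have hmul : Tendsto (fun u => Real.exp (-Hc u) * (P t * Q u))
          (nhdsWithin t (Ici t)) (nhds (Real.exp (-Hc t) * (P t * 1))) :=
        hexp.mul ((tendsto_const_nhds (x := P t)).mul hQtendsto)
      have : F t = 1 - Real.exp (-Hc t) * (P t * 1) := by
        rw [hFeq t, mul_one]
      rw [this]
      exact tendsto_const_nhds.sub hmul
    refine hGlim.congr' ?_
    have hmem : Ici t ∩ Iio (t + 1) ∈ nhdsWithin t (Ici t) :=
      inter_mem self_mem_nhdsWithin
        (mem_nhdsWithin_of_mem_nhds (Iio_mem_nhds (by linarith)))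
    filter_upwards [hmem] with u hu
    obtain ⟨hu1, _⟩ := hu
    rw [hFeq u, hsplit t u ht hu1]
  -- Part 5
  have part5 : Tendsto Hc atTop atTop → Tendsto F atTop (nhds 1) := by
    intro hH
    have hexp0 : Tendsto (fun u => Real.exp (-Hc u)) atTop (nhds 0) :=
      Real.tendsto_exp_neg_atTop_nhds_zero.comp hH
    have hlow : Tendsto (fun u => 1 - Real.exp (-Hc u)) atTop (nhds 1) := by
      have := tendsto_const_nhds (x := (1:ℝ)) (f := atTop (α := ℝ)) |>.sub hexp0
      simpa using this
    refine tendsto_of_tendsto_of_tendsto_of_le_of_le' hlow tendsto_const_nhds ?_ ?_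
    · filter_upwards [eventually_ge_atTop (0:ℝ)] with u hu
      linarith [part4 u hu]
    · filter_upwards [eventually_ge_atTop (0:ℝ)] with u hu
      exact (part1 u hu).2
  exact ⟨part1, part2, part3, part4, part5⟩
end
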